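/- Let D, a, ε, β, δ, d > 0, η > 0. Define H₁(x,t) = e^{-x²/(4Dt)}/(2√(πDt)) e^{-at} - (1/2)∫₀ᵗ e^{-x²/(4Dy) - ay}/√(t-y) · (√ε e^{-βε(t-y)}/√(πD)) J₁(2√(ε y (t-y))) dy. Then for |x| ≥ η and 0 < t ≤ 1, |H₁(x,t)| ≤ e^{-η²/(4Dt)}/(2√(πDt)) + √(εt/(πD)); consequently H₁(x,t) → 0 as t → 0⁺ uniformly for |x| ≥ η. -/

import Mathlib

open Real MeasureTheory intervalIntegral

/-- Bessel function of the first kind of order one. -/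
noncomputable def besselJ1 (z : ℝ) : ℝ :=
  ∑' m : ℕ, ((-1 : ℝ) ^ m / ((Nat.factorial m : ℝ) * (Nat.factorial (m + 1) : ℝ))) *
    (z / 2) ^ (2 * m + 1)

lemma coeff_id (k : ℕ) :
    (∏ i ∈ Finset.range (k + 1), ((2 * (i:ℝ) + 1) / (2 * i + 2))) / (Nat.factorial (2*k+1) : ℝ)
      = 1 / ((Nat.factorial k : ℝ) * (Nat.factorial (k+1) : ℝ)) * (1/2) ^ (2*k+1) := by
  induction k with
  | zero => norm_num
  | succ n ih =>
    have h1 : (Nat.factorial (2*(n+1)+1) : ℝ) = (2*n+3) * ((2*n+2) * (Nat.factorial (2*n+1))) := by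
      have e : 2*(n+1)+1 = (2*n+1)+1+1 := by ring
      rw [e, Nat.factorial_succ, Nat.factorial_succ]; push_cast; ring
    have h3 : (Nat.factorial (n+1+1) : ℝ) = (n+2) * Nat.factorial (n+1) := by
      rw [Nat.factorial_succ]; push_cast; ring
    have hf1 : (Nat.factorial (2*n+1) : ℝ) ≠ 0 := by positivity
    have hfn : (Nat.factorial n : ℝ) ≠ 0 := by positivity
    have hfn1 : (Nat.factorial (n+1) : ℝ) ≠ 0 := by positivity
    have hP : (∏ i ∈ Finset.range (n + 1), ((2 * (i:ℝ) + 1) / (2 * i + 2)))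
        = (Nat.factorial (2*n+1) : ℝ) / ((Nat.factorial n : ℝ) * (Nat.factorial (n+1) : ℝ)) * (1/2) ^ (2*n+1) := by
      field_simp at ih ⊢; linarith [ih]
    have h2 : (Nat.factorial (n+1) : ℝ) = (n+1) * Nat.factorial n := by
      rw [Nat.factorial_succ]; push_cast; ring
    rw [Finset.prod_range_succ, hP, h1, h3, h2]
    have e2 : 2*(n+1)+1 = 2*n+1+2 := by ring
    rw [e2, pow_add, pow_add]
    push_cast
    field_simp
    ring

lemma abs_besselJ1_le_one (z : ℝ) : |besselJ1 z| ≤ 1 := by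
  set μ := volume.restrict (Set.Ioc (0:ℝ) π) with hμ
  set F : ℕ → ℝ → ℝ := fun k θ =>
    (-1:ℝ)^k * z^(2*k+1) / (Nat.factorial (2*k+1) : ℝ) * Real.sin θ ^ (2*(k+1)) with hF
  have hpt : ∀ θ : ℝ, HasSum (fun k => F k θ) (Real.sin θ * Real.sin (z * Real.sin θ)) := by
    intro θ
    have h := (Real.hasSum_sin (z * Real.sin θ)).mul_left (Real.sin θ)
    convert h using 2 with k
    · rfl
    simp only [hF]
    rw [mul_pow]
    ring
  have hcont : ∀ k, Continuous (F k) := fun k => continuous_const.mul (Real.continuous_sin.pow _)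
  have hint : ∀ k, Integrable (F k) μ := fun k => (hcont k).integrableOn_Ioc
  have hC : ∀ k (θ : ℝ), ‖F k θ‖ ≤ |z|^(2*k+1) / (Nat.factorial (2*k+1) : ℝ) := by
    intro k θ
    simp only [hF, Real.norm_eq_abs, abs_mul, abs_div, abs_pow, abs_neg, abs_one, one_pow,
      one_mul, abs_abs, Nat.abs_cast]
    have h1 : |Real.sin θ| ^ (2*(k+1)) ≤ 1 :=
      pow_le_one₀ (abs_nonneg _) (Real.abs_sin_le_one θ)
    calc |z|^(2*k+1) / (Nat.factorial (2*k+1) : ℝ) * |Real.sin θ| ^ (2*(k+1))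
        ≤ |z|^(2*k+1) / (Nat.factorial (2*k+1) : ℝ) * 1 := by
          apply mul_le_mul_of_nonneg_left h1 (by positivity)
      _ = _ := by ring
  have hμπ : μ Set.univ = ENNReal.ofReal π := by
    simp [hμ, Real.volume_Ioc]
  have hnormint : ∀ k, ∫ θ, ‖F k θ‖ ∂μ ≤ |z|^(2*k+1) / (Nat.factorial (2*k+1) : ℝ) * π := by
    intro k
    calc ∫ θ, ‖F k θ‖ ∂μ ≤ ∫ _θ, |z|^(2*k+1) / (Nat.factorial (2*k+1) : ℝ) ∂μ :=
          integral_mono (hint k).norm (integrable_const _) (hC k)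
      _ = |z|^(2*k+1) / (Nat.factorial (2*k+1) : ℝ) * π := by
          rw [MeasureTheory.integral_const, measureReal_def, hμπ, smul_eq_mul, ENNReal.toReal_ofReal Real.pi_pos.le, mul_comm]
  have hsummable : Summable (fun k => ∫ θ, ‖F k θ‖ ∂μ) := by
    apply Summable.of_nonneg_of_le (fun k => integral_nonneg (fun θ => norm_nonneg _)) hnormint
    have : Summable (fun k => |z|^(2*k+1) / (Nat.factorial (2*k+1) : ℝ)) := by
      have hinj : Function.Injective (fun k : ℕ => 2 * k + 1) := by
        intro a b h; simpa using h
      exact (Real.summable_pow_div_factorial |z|).comp_injective hinj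
    exact this.mul_right π
  have hkey := hasSum_integral_of_summable_integral_norm hint hsummable
  -- value of each integral
  have hval : ∀ k, ∫ θ, F k θ ∂μ =
      (-1:ℝ)^k * z^(2*k+1) / (Nat.factorial (2*k+1) : ℝ) *
        (π * ∏ i ∈ Finset.range (k+1), ((2 * (i:ℝ) + 1) / (2 * i + 2))) := by
    intro k
    have h1 : ∫ θ, F k θ ∂μ = ∫ θ in (0:ℝ)..π, F k θ := by
      rw [intervalIntegral.integral_of_le Real.pi_pos.le]
    rw [h1]
    simp only [hF]
    rw [intervalIntegral.integral_const_mul]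
    congr 1
    exact integral_sin_pow_even (n := k+1)
  rw [funext hval] at hkey
  have hts : (fun θ : ℝ => ∑' i, F i θ) = fun θ => Real.sin θ * Real.sin (z * Real.sin θ) :=
    funext fun θ => (hpt θ).tsum_eq
  rw [hts] at hkey
  -- identify ∑ with besselJ1 z * π
  have hb : HasSum (fun k => ((-1 : ℝ) ^ k / ((Nat.factorial k : ℝ) * (Nat.factorial (k + 1) : ℝ))) *
      (z / 2) ^ (2 * k + 1) * π) ((∫ θ, Real.sin θ * Real.sin (z * Real.sin θ) ∂μ)) := by
    convert hkey using 2 with k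
    · rfl
    have hfk : (Nat.factorial (2*k+1) : ℝ) ≠ 0 := by positivity
    have hprod : (∏ i ∈ Finset.range (k + 1), ((2 * (i:ℝ) + 1) / (2 * i + 2)))
        = 1 / ((Nat.factorial k : ℝ) * (Nat.factorial (k+1) : ℝ)) * (1/2) ^ (2*k+1)
            * (Nat.factorial (2*k+1) : ℝ) := by
      rw [← coeff_id k, div_mul_cancel₀ _ hfk]
    rw [hprod, div_pow]
    have hfn : (Nat.factorial k : ℝ) ≠ 0 := by positivity
    have hfn1 : (Nat.factorial (k+1) : ℝ) ≠ 0 := by positivity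
    have h2 : ((1:ℝ)/2) ^ (2*k+1) = 1 / 2 ^ (2*k+1) := by rw [div_pow, one_pow]
    rw [h2]
    field_simp
  have hb2 : besselJ1 z * π = ∫ θ, Real.sin θ * Real.sin (z * Real.sin θ) ∂μ := by
    rw [besselJ1, ← tsum_mul_right]
    exact hb.tsum_eq
  have hInorm : |∫ θ, Real.sin θ * Real.sin (z * Real.sin θ) ∂μ| ≤ π := by
    have := norm_integral_le_of_norm_le (μ := μ) (f := fun θ => Real.sin θ * Real.sin (z * Real.sin θ))
      (g := fun _ => (1:ℝ)) (integrable_const _) ?_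
    · rw [MeasureTheory.integral_const, measureReal_def, hμπ, smul_eq_mul, ENNReal.toReal_ofReal Real.pi_pos.le, mul_one] at this
      simpa using this
    · filter_upwards with θ
      rw [Real.norm_eq_abs, abs_mul]
      exact mul_le_one₀ (Real.abs_sin_le_one θ) (abs_nonneg _) (Real.abs_sin_le_one _)
  have hπ : (0:ℝ) < π := Real.pi_pos
  have : |besselJ1 z| * π ≤ π := by
    calc |besselJ1 z| * π = |besselJ1 z * π| := by
          rw [abs_mul, abs_of_pos hπ]
      _ = |∫ θ, Real.sin θ * Real.sin (z * Real.sin θ) ∂μ| := by rw [hb2]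
      _ ≤ π := hInorm
  nlinarith

set_option maxHeartbeats 1000000 in
theorem H1_bound_and_limit
    (D a ε β δ d η : ℝ) (hD : 0 < D) (ha : 0 < a) (hε : 0 < ε) (hβ : 0 < β)
    (hδ : 0 < δ) (hd : 0 < d) (hη : 0 < η)
    (H₁ : ℝ → ℝ → ℝ)
    (hH₁ : ∀ x t, 0 < t → H₁ x t =
      Real.exp (-x ^ 2 / (4 * D * t)) / (2 * Real.sqrt (Real.pi * D * t)) * Real.exp (-a * t) -
        (1 / 2) * ∫ y in (0:ℝ)..t,
          Real.exp (-x ^ 2 / (4 * D * y) - a * y) / Real.sqrt (t - y) *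
            (Real.sqrt ε * Real.exp (-β * ε * (t - y)) / Real.sqrt (Real.pi * D)) *
            besselJ1 (2 * Real.sqrt (ε * y * (t - y)))) :
    (∀ x t, |x| ≥ η → 0 < t → t ≤ 1 →
        |H₁ x t| ≤ Real.exp (-η ^ 2 / (4 * D * t)) / (2 * Real.sqrt (Real.pi * D * t)) +
          Real.sqrt (ε * t / (Real.pi * D))) ∧
    (∀ e : ℝ, 0 < e → ∃ t₀ : ℝ, 0 < t₀ ∧
        ∀ t, 0 < t → t < t₀ → ∀ x, |x| ≥ η → |H₁ x t| < e) := by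
  have hπD : (0:ℝ) < Real.pi * D := mul_pos Real.pi_pos hD
  have hsπD : (0:ℝ) < Real.sqrt (Real.pi * D) := Real.sqrt_pos.mpr hπD
  have main : ∀ x t, |x| ≥ η → 0 < t → t ≤ 1 →
      |H₁ x t| ≤ Real.exp (-η ^ 2 / (4 * D * t)) / (2 * Real.sqrt (Real.pi * D * t)) +
        Real.sqrt (ε * t / (Real.pi * D)) := by
    intro x t hx ht ht1
    rw [hH₁ x t ht]
    set T1 := Real.exp (-x ^ 2 / (4 * D * t)) / (2 * Real.sqrt (Real.pi * D * t)) * Real.exp (-a * t) with hT1def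
    set f : ℝ → ℝ := fun y =>
      Real.exp (-x ^ 2 / (4 * D * y) - a * y) / Real.sqrt (t - y) *
        (Real.sqrt ε * Real.exp (-β * ε * (t - y)) / Real.sqrt (Real.pi * D)) *
        besselJ1 (2 * Real.sqrt (ε * y * (t - y))) with hfdef
    have hsπDt : (0:ℝ) < Real.sqrt (Real.pi * D * t) :=
      Real.sqrt_pos.mpr (mul_pos hπD ht)
    -- bound on T1
    have hT1 : |T1| ≤ Real.exp (-η ^ 2 / (4 * D * t)) / (2 * Real.sqrt (Real.pi * D * t)) := by
      have h0 : (0:ℝ) ≤ T1 := by positivity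
      rw [abs_of_nonneg h0, hT1def]
      have hx2 : η ^ 2 ≤ x ^ 2 := by
        rw [← sq_abs x]
        exact pow_le_pow_left₀ hη.le hx 2
      have h1 : Real.exp (-x ^ 2 / (4 * D * t)) ≤ Real.exp (-η ^ 2 / (4 * D * t)) := by
        apply Real.exp_le_exp.mpr
        gcongr
      calc Real.exp (-x ^ 2 / (4 * D * t)) / (2 * Real.sqrt (Real.pi * D * t)) * Real.exp (-a * t)
          ≤ Real.exp (-η ^ 2 / (4 * D * t)) / (2 * Real.sqrt (Real.pi * D * t)) * 1 := by
            gcongr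
            · exact Real.exp_le_one_iff.mpr (by nlinarith [mul_nonneg ha.le ht.le])
        _ = Real.exp (-η ^ 2 / (4 * D * t)) / (2 * Real.sqrt (Real.pi * D * t)) := mul_one _
    -- bound on the integral
    have hg_int : IntervalIntegrable
        (fun y : ℝ => Real.sqrt ε / Real.sqrt (Real.pi * D) * (t - y) ^ (-(1/2) : ℝ))
        volume 0 t := by
      have h1 : IntervalIntegrable (fun y : ℝ => y ^ (-(1/2) : ℝ)) volume 0 t :=
        intervalIntegrable_rpow' (by norm_num)
      have h2 := (h1.comp_sub_left t).symm
      simp only [sub_zero, sub_self] at h2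
      exact h2.const_mul _
    have hgval : (∫ y in (0:ℝ)..t, Real.sqrt ε / Real.sqrt (Real.pi * D) * (t - y) ^ (-(1/2) : ℝ))
        = Real.sqrt ε / Real.sqrt (Real.pi * D) * (2 * Real.sqrt t) := by
      rw [intervalIntegral.integral_const_mul]
      congr 1
      rw [intervalIntegral.integral_comp_sub_left (fun y : ℝ => y ^ (-(1/2) : ℝ)) t]
      simp only [sub_zero, sub_self]
      rw [integral_rpow (Or.inl (by norm_num))]
      norm_num
      rw [← Real.sqrt_eq_rpow]
      ring
    have hbound : ∀ y ∈ Set.uIoc (0:ℝ) t,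
        ‖f y‖ ≤ Real.sqrt ε / Real.sqrt (Real.pi * D) * (t - y) ^ (-(1/2) : ℝ) := by
      intro y hy
      rw [Set.uIoc_of_le ht.le] at hy
      obtain ⟨hy0, hyt⟩ := hy
      have hty : (0:ℝ) ≤ t - y := by linarith
      have hrw : (t - y) ^ (-(1/2) : ℝ) = 1 / Real.sqrt (t - y) := by
        rw [Real.rpow_neg hty, Real.sqrt_eq_rpow]
        norm_num
      rw [hrw, hfdef]
      simp only [norm_mul, Real.norm_eq_abs, abs_div]
      have e1 : |Real.exp (-x ^ 2 / (4 * D * y) - a * y)| ≤ 1 := by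
        rw [abs_of_pos (Real.exp_pos _)]
        apply Real.exp_le_one_iff.mpr
        have h5 : -x ^ 2 / (4 * D * y) ≤ 0 :=
          div_nonpos_of_nonpos_of_nonneg (neg_nonpos.mpr (by positivity)) (by positivity)
        nlinarith [mul_nonneg ha.le hy0.le]
      have e2 : |Real.sqrt ε * Real.exp (-β * ε * (t - y))| ≤ Real.sqrt ε := by
        rw [abs_of_nonneg (by positivity)]
        calc Real.sqrt ε * Real.exp (-β * ε * (t - y)) ≤ Real.sqrt ε * 1 := by
              apply mul_le_mul_of_nonneg_left _ (Real.sqrt_nonneg _)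
              apply Real.exp_le_one_iff.mpr
              nlinarith [mul_nonneg (mul_nonneg hβ.le hε.le) hty]
          _ = Real.sqrt ε := mul_one _
      have e3 := abs_besselJ1_le_one (2 * Real.sqrt (ε * y * (t - y)))
      have hsq : |Real.sqrt (t - y)| = Real.sqrt (t - y) := abs_of_nonneg (Real.sqrt_nonneg _)
      have hsq2 : |Real.sqrt (Real.pi * D)| = Real.sqrt (Real.pi * D) := abs_of_nonneg (Real.sqrt_nonneg _)
      rw [hsq, hsq2]
      calc |Real.exp (-x ^ 2 / (4 * D * y) - a * y)| / Real.sqrt (t - y) *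
            (|Real.sqrt ε * Real.exp (-β * ε * (t - y))| / Real.sqrt (Real.pi * D)) *
            |besselJ1 (2 * Real.sqrt (ε * y * (t - y)))|
          ≤ 1 / Real.sqrt (t - y) * (Real.sqrt ε / Real.sqrt (Real.pi * D)) * 1 := by
            gcongr
        _ = Real.sqrt ε / Real.sqrt (Real.pi * D) * (1 / Real.sqrt (t - y)) := by ring
    have hT2 : |(1/2 : ℝ) * ∫ y in (0:ℝ)..t, f y| ≤ Real.sqrt (ε * t / (Real.pi * D)) := by
      have h := intervalIntegral.norm_integral_le_abs_of_norm_le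
        (f := f) (μ := volume) (a := 0) (b := t)
        (g := fun y => Real.sqrt ε / Real.sqrt (Real.pi * D) * (t - y) ^ (-(1/2) : ℝ))
        (by filter_upwards [ae_restrict_mem measurableSet_uIoc] with y hy using hbound y hy)
        hg_int
      rw [hgval, abs_of_nonneg (by positivity)] at h
      rw [Real.norm_eq_abs] at h
      have hrhs : Real.sqrt (ε * t / (Real.pi * D)) = Real.sqrt ε * Real.sqrt t / Real.sqrt (Real.pi * D) := by
        rw [Real.sqrt_div (by positivity), Real.sqrt_mul hε.le]
      rw [abs_mul, abs_of_nonneg (by norm_num : (0:ℝ) ≤ (1/2:ℝ)), hrhs]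
      calc (1/2 : ℝ) * |∫ y in (0:ℝ)..t, f y|
          ≤ (1/2 : ℝ) * (Real.sqrt ε / Real.sqrt (Real.pi * D) * (2 * Real.sqrt t)) := by
            apply mul_le_mul_of_nonneg_left h (by norm_num)
        _ = Real.sqrt ε * Real.sqrt t / Real.sqrt (Real.pi * D) := by ring
    calc |T1 - (1/2 : ℝ) * ∫ y in (0:ℝ)..t, f y|
        ≤ |T1| + |(1/2 : ℝ) * ∫ y in (0:ℝ)..t, f y| := abs_sub _ _
      _ ≤ Real.exp (-η ^ 2 / (4 * D * t)) / (2 * Real.sqrt (Real.pi * D * t)) +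
          Real.sqrt (ε * t / (Real.pi * D)) := add_le_add hT1 hT2
  refine ⟨main, ?_⟩
  intro e he
  set c := η ^ 2 / (4 * D) with hc
  have hcpos : (0:ℝ) < c := by positivity
  set K := 1 / (2 * c * Real.sqrt (Real.pi * D)) + Real.sqrt (ε / (Real.pi * D)) with hK
  have hKpos : (0:ℝ) < K := by positivity
  refine ⟨min 1 ((e / (K + 1)) ^ 2), by positivity, ?_⟩
  intro t ht htlt x hx
  have ht1 : t ≤ 1 := (lt_of_lt_of_le htlt (min_le_left _ _)).le
  have hb := main x t hx ht ht1
  have hst : 0 < Real.sqrt t := Real.sqrt_pos.mpr ht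
  have h1 : Real.exp (-η ^ 2 / (4 * D * t)) / (2 * Real.sqrt (Real.pi * D * t))
      ≤ 1 / (2 * c * Real.sqrt (Real.pi * D)) * Real.sqrt t := by
    have hexp : Real.exp (-η ^ 2 / (4 * D * t)) ≤ t / c := by
      have h2 : c / t ≤ Real.exp (c / t) := by nlinarith [Real.add_one_le_exp (c / t)]
      have he2 : -η ^ 2 / (4 * D * t) = -(c / t) := by
        rw [hc]; field_simp
      rw [he2, Real.exp_neg]
      have hct : (0:ℝ) < c / t := by positivity
      calc (Real.exp (c / t))⁻¹ ≤ (c / t)⁻¹ := by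
            apply inv_anti₀ hct h2
        _ = t / c := by rw [inv_div]
    have hsqrtt : Real.sqrt (Real.pi * D * t) = Real.sqrt (Real.pi * D) * Real.sqrt t :=
      Real.sqrt_mul hπD.le t
    rw [hsqrtt]
    calc Real.exp (-η ^ 2 / (4 * D * t)) / (2 * (Real.sqrt (Real.pi * D) * Real.sqrt t))
        ≤ (t / c) / (2 * (Real.sqrt (Real.pi * D) * Real.sqrt t)) := by gcongr
      _ = 1 / (2 * c * Real.sqrt (Real.pi * D)) * Real.sqrt t := by
          field_simp
          linear_combination (-1 : ℝ) * Real.sq_sqrt ht.le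
  have h2 : Real.sqrt (ε * t / (Real.pi * D)) = Real.sqrt (ε / (Real.pi * D)) * Real.sqrt t := by
    rw [← Real.sqrt_mul (by positivity)]
    congr 1
    ring
  have hKt : |H₁ x t| ≤ K * Real.sqrt t := by
    rw [hK, add_mul]
    rw [h2] at hb
    linarith [hb, h1]
  have hs : Real.sqrt t < e / (K + 1) := by
    have htlt2 : t < (e / (K + 1)) ^ 2 := lt_of_lt_of_le htlt (min_le_right _ _)
    calc Real.sqrt t < Real.sqrt ((e / (K + 1)) ^ 2) := Real.sqrt_lt_sqrt ht.le htlt2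
      _ = e / (K + 1) := Real.sqrt_sq (by positivity)
  calc |H₁ x t| ≤ K * Real.sqrt t := hKt
    _ < e := by
      have hse : Real.sqrt t * (K + 1) < e := by
        rw [← lt_div_iff₀ (by positivity)]
        exact hs
      nlinarith [hst, hKpos]
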